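/- For n cars all of size 1 and a trailer of length z-1, the number of parking sequences equals z(z+n)^{n-1}. -/

import Mathlib

/-- The first empty spot `j ≥ c`, given the finite set `occ` of occupied spots. -/
def firstFree (occ : Finset ℕ) (c : ℕ) : ℕ :=
  Nat.find (p := fun j => c ≤ j ∧ j ∉ occ)
    (by
      refine ⟨occ.sup id + c + 1, by omega, fun h => ?_⟩
      have := Finset.le_sup (f := id) h
      simp only [id] at this
      omega)

/-- One step of the parking process on spots `1, …, N`: the car with preference and
size `cs = (c, s)` drives to the first empty spot `j ≥ c` and parks in spots
`j, …, j+s-1` if they are all empty and within the `N` spots; otherwise failure. -/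
def parkStep (N : ℕ) (occ : Option (Finset ℕ)) (cs : ℕ × ℕ) : Option (Finset ℕ) :=
  match occ with
  | none => none
  | some occ =>
    let j := firstFree occ cs.1
    if j + cs.2 - 1 ≤ N ∧ ∀ k ∈ Finset.Ico j (j + cs.2), k ∉ occ then
      some (occ ∪ Finset.Ico j (j + cs.2))
    else none

/-- The result of letting cars `C₁, …, Cₙ` of sizes `y` and preferences `c` park in
order on `z - 1 + ∑ y i` spots, where the first `z - 1` spots are occupied by a
trailer: `some occ` records the occupied spots, `none` records failure. -/
def parkFold (n : ℕ) (y : Fin n → ℕ) (z : ℕ) (c : Fin n → ℕ) : Option (Finset ℕ) :=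
  (List.ofFn fun i : Fin n => ((c i, y i) : ℕ × ℕ)).foldl
    (parkStep (z - 1 + ∑ i, y i)) (some (Finset.Ico 1 z))

/-- `(c₁, …, cₙ)` is a parking sequence for car sizes `y` and a trailer of length
`z - 1` if all preferences are genuine spots and all cars park successfully. -/
def IsParkingSeq (n : ℕ) (y : Fin n → ℕ) (z : ℕ) (c : Fin n → ℕ) : Prop :=
  (∀ i, 1 ≤ c i) ∧ parkFold n y z c ≠ none

instance (n : ℕ) (y : Fin n → ℕ) (z : ℕ) : DecidablePred (IsParkingSeq n y z) :=
  fun c => by unfold IsParkingSeq; infer_instance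

/-- The number of parking sequences for car sizes `y` and a trailer of length `z - 1`. -/
def numPark (n : ℕ) (y : Fin n → ℕ) (z : ℕ) : ℕ :=
  ((Fintype.piFinset fun _ : Fin n => Finset.Icc 1 (z - 1 + ∑ i, y i)).filter
    (IsParkingSeq n y z)).card

/-! A unit car preferring `c` takes the first free spot `≥ c`, so all cars park iff for every `t`
at most as many cars prefer a spot `≥ t` as there are free spots in `[t, N]`, where `N` is the last
spot. Behind the trailer this reads `#{i | t ≤ cᵢ} ≤ z + n - t` for `t ≥ 1`.

With `M = z + n` and preferences read in `ZMod M`, that condition says every arc of `k + 1` spots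
ending at `0` is preferred by at most `k` cars. By the cycle lemma, exactly `M - n` of the `M`
rotations of any `a : Fin n → ZMod M` satisfy it. These rotations are the strict records in one
period of the walk `t ↦ t - #{cars preferring a spot < t}`, which climbs at most one unit per step
and gains `M - n` per period. Double counting then gives `M ^ n (M - n) / M = z (z + n) ^ (n - 1)`.
-/

open Finset

lemma le_firstFree (occ : Finset ℕ) (c : ℕ) : c ≤ firstFree occ c :=
  (Nat.find_spec (p := fun j => c ≤ j ∧ j ∉ occ) _).1

lemma firstFree_notMem (occ : Finset ℕ) (c : ℕ) : firstFree occ c ∉ occ :=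
  (Nat.find_spec (p := fun j => c ≤ j ∧ j ∉ occ) _).2

lemma firstFree_le {occ : Finset ℕ} {c x : ℕ} (hcx : c ≤ x) (hx : x ∉ occ) :
    firstFree occ c ≤ x :=
  Nat.find_min' _ ⟨hcx, hx⟩

def parkUnits (N : ℕ) (occ : Finset ℕ) (L : List ℕ) : Option (Finset ℕ) :=
  (L.map fun c => (c, 1)).foldl (parkStep N) (some occ)

lemma foldl_parkStep_none (N : ℕ) (L : List (ℕ × ℕ)) : L.foldl (parkStep N) none = none := by
  induction L with
  | nil => rfl
  | cons _ _ ih => exact ih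

lemma parkStep_some_unit (N : ℕ) (occ : Finset ℕ) (c : ℕ) :
    parkStep N (some occ) (c, 1) =
      if firstFree occ c ≤ N then some (insert (firstFree occ c) occ) else none := by
  simp only [parkStep, Nat.add_sub_cancel, Nat.Ico_succ_singleton, mem_singleton, forall_eq,
    firstFree_notMem, not_false_eq_true, and_true, union_singleton]

lemma parkUnits_cons (N : ℕ) (occ : Finset ℕ) (c : ℕ) (L : List ℕ) :
    parkUnits N occ (c :: L) =
      if firstFree occ c ≤ N then parkUnits N (insert (firstFree occ c) occ) L else none := by
  simp only [parkUnits, List.map_cons, List.foldl_cons, parkStep_some_unit]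
  split_ifs
  · rfl
  · exact foldl_parkStep_none N _

lemma firstFree_le_of_card_pos {occ : Finset ℕ} {c N : ℕ} (h : 0 < #(Icc c N \ occ)) :
    firstFree occ c ≤ N := by
  obtain ⟨x, hx⟩ := card_pos.1 h
  simp only [mem_sdiff, mem_Icc] at hx
  exact (firstFree_le hx.1.1 hx.2).trans hx.1.2

lemma card_sdiff_insert_add_one {s occ : Finset ℕ} {j : ℕ} (hjs : j ∈ s) (hj : j ∉ occ) :
    #(s \ insert j occ) + 1 = #(s \ occ) := by
  rw [sdiff_insert]
  exact card_erase_add_one (mem_sdiff.2 ⟨hjs, hj⟩)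

lemma card_sdiff_insert_le (s occ : Finset ℕ) (j : ℕ) : #(s \ insert j occ) ≤ #(s \ occ) :=
  card_le_card (sdiff_subset_sdiff subset_rfl (subset_insert _ _))

lemma sdiff_insert_of_notMem {s : Finset ℕ} (occ : Finset ℕ) {j : ℕ} (hjs : j ∉ s) :
    s \ insert j occ = s \ occ := by
  rw [sdiff_insert, erase_eq_of_notMem (fun h => hjs (mem_sdiff.1 h).1)]

lemma Icc_sdiff_eq_of_le_firstFree {occ : Finset ℕ} {c t : ℕ} (hct : c ≤ t)
    (ht : t ≤ firstFree occ c) (N : ℕ) : Icc t N \ occ = Icc c N \ occ := by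
  ext x
  simp only [mem_sdiff, mem_Icc]
  constructor
  · rintro ⟨⟨htx, hxN⟩, hx⟩
    exact ⟨⟨hct.trans htx, hxN⟩, hx⟩
  · rintro ⟨⟨hcx, hxN⟩, hx⟩
    exact ⟨⟨ht.trans (firstFree_le hcx hx), hxN⟩, hx⟩

theorem parkUnits_ne_none_iff (N : ℕ) (occ : Finset ℕ) (L : List ℕ) :
    parkUnits N occ L ≠ none ↔ ∀ t, L.countP (fun c => t ≤ c) ≤ #(Icc t N \ occ) := by
  induction L generalizing occ with
  | nil => simp [parkUnits]
  | cons c L ih =>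
    simp only [List.countP_cons, decide_eq_true_eq, parkUnits_cons]
    set j := firstFree occ c
    have hcj : c ≤ j := le_firstFree occ c
    have hjocc : j ∉ occ := firstFree_notMem occ c
    constructor
    · intro h t
      split_ifs at h with hjN
      · have hL := (ih _).1 h t
        split_ifs with htc
        · have := card_sdiff_insert_add_one (mem_Icc.2 ⟨htc.trans hcj, hjN⟩) hjocc
          omega
        · have := card_sdiff_insert_le (Icc t N) occ j
          omega
      · exact (h rfl).elim
    · intro h
      have hjN : j ≤ N := by
        have hc := h c
        rw [if_pos le_rfl] at hc
        exact firstFree_le_of_card_pos (by omega)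
      rw [if_pos hjN]
      refine (ih _).2 fun t => ?_
      have ht := h t
      by_cases htc : t ≤ c
      · rw [if_pos htc] at ht
        have := card_sdiff_insert_add_one (mem_Icc.2 ⟨htc.trans hcj, hjN⟩) hjocc
        omega
      by_cases htj : t ≤ j
      · -- the spots in `[c, t)` are occupied, so the car at `j` took a free spot of `[t, N]`
        have hc := h c
        rw [if_pos le_rfl] at hc
        have hfree := card_sdiff_insert_add_one (mem_Icc.2 ⟨htj, hjN⟩) hjocc
        rw [Icc_sdiff_eq_of_le_firstFree (by omega) htj] at hfree
        have hmono : L.countP (fun x => t ≤ x) ≤ L.countP (fun x => c ≤ x) :=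
          List.countP_mono_left fun x _ hx => by simp only [decide_eq_true_eq] at hx ⊢; omega
        omega
      · rw [if_neg htc] at ht
        rw [sdiff_insert_of_notMem occ (by simp [mem_Icc]; omega)]
        exact ht

lemma countP_ofFn {n : ℕ} (c : Fin n → ℕ) (p : ℕ → Bool) :
    (List.ofFn c).countP p = #{i | p (c i)} := by
  induction n with
  | zero => simp
  | succ n ih =>
    rw [List.ofFn_succ, List.countP_cons, ih, card_filter, card_filter, Fin.sum_univ_succ]
    omega

lemma parkFold_unit (n z : ℕ) (c : Fin n → ℕ) :
    parkFold n (fun _ => 1) z c = parkUnits (z - 1 + n) (Ico 1 z) (List.ofFn c) := by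
  simp only [parkFold, parkUnits, List.map_ofFn, sum_const, card_univ, Fintype.card_fin,
    smul_eq_mul, mul_one]
  rfl

lemma Icc_sdiff_Ico_one {t : ℕ} (ht : 1 ≤ t) (z N : ℕ) :
    Icc t N \ Ico 1 z = Icc (max t z) N := by
  ext x
  simp only [mem_sdiff, mem_Icc, mem_Ico]
  omega

theorem isParkingSeq_unit_iff {n z : ℕ} (hz : 1 ≤ z) (c : Fin n → ℕ) :
    IsParkingSeq n (fun _ => 1) z c ↔
      (∀ i, 1 ≤ c i) ∧ ∀ t, 1 ≤ t → #{i | t ≤ c i} ≤ z + n - t := by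
  unfold IsParkingSeq
  simp only [parkFold_unit, parkUnits_ne_none_iff, countP_ofFn, decide_eq_true_eq]
  have hcard (t : ℕ) : #{i | t ≤ c i} ≤ n := (card_filter_le _ _).trans (by simp)
  refine and_congr_right fun _ => ⟨fun h t ht => ?_, fun h t => ?_⟩
  · have := h t
    rw [Icc_sdiff_Ico_one ht, Nat.card_Icc] at this
    have := hcard t
    omega
  · rcases Nat.eq_zero_or_pos t with rfl | ht
    · have hsub : Icc z (z - 1 + n) ⊆ Icc 0 (z - 1 + n) \ Ico 1 z := by
        intro x
        simp only [mem_sdiff, mem_Icc, mem_Ico]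
        omega
      have := card_le_card hsub
      rw [Nat.card_Icc] at this
      have := hcard 0
      omega
    · rw [Icc_sdiff_Ico_one ht, Nat.card_Icc]
      have := h t ht
      have := hcard t
      omega

section Records

variable (H : ℕ → ℤ)

def runMax (q : ℕ) : ℤ := (range (q + 1)).sup' nonempty_range_add_one H

variable {H}

lemma le_runMax {v q : ℕ} (hvq : v ≤ q) : H v ≤ runMax H q :=
  le_sup' H (mem_range.2 (Nat.lt_succ_of_le hvq))

lemma exists_eq_runMax (q : ℕ) : ∃ v ≤ q, runMax H q = H v := by
  obtain ⟨v, hv, he⟩ := exists_mem_eq_sup' nonempty_range_add_one H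
  exact ⟨v, Nat.lt_succ_iff.1 (mem_range.1 hv), he⟩

lemma runMax_lt_iff {q : ℕ} {m : ℤ} : runMax H q < m ↔ ∀ v ≤ q, H v < m := by
  simp only [runMax, sup'_lt_iff, mem_range, Nat.lt_succ_iff]

lemma runMax_succ (q : ℕ) : runMax H (q + 1) = max (runMax H q) (H (q + 1)) := by
  simp [runMax, range_add_one, max_comm]

/-- Since `H` climbs by at most one per step, every strict record raises the running maximum
by exactly one. -/
theorem card_strictRecords_Ioc (hstep : ∀ t, H (t + 1) ≤ H t + 1) {p q : ℕ} (hpq : p ≤ q) :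
    (#{t ∈ Ioc p q | ∀ v < t, H v < H t} : ℤ) = runMax H q - runMax H p := by
  induction q, hpq using Nat.le_induction with
  | base => simp
  | succ q hpq ih =>
    have hrec : (∀ v < q + 1, H v < H (q + 1)) ↔ runMax H q < H (q + 1) := by
      simp only [runMax_lt_iff, Nat.lt_succ_iff]
    rw [← insert_Ioc_right_eq_Ioc_add_one hpq, filter_insert, runMax_succ]
    have := hstep q
    have := le_runMax (H := H) (le_refl q)
    split_ifs with h
    · rw [card_insert_of_notMem (by simp), Nat.cast_succ, ih]
      have := hrec.1 h
      rw [max_eq_right this.le]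
      omega
    · rw [ih, max_eq_left (not_lt.1 (hrec.not.1 h))]

theorem runMax_add_period {M : ℕ} {s : ℤ} (hper : ∀ t, H (t + M) = H t + s) (hs : 0 ≤ s)
    {q : ℕ} (hMq : M ≤ q) : runMax H (q + M) = runMax H q + s := by
  apply le_antisymm
  · obtain ⟨v, hv, he⟩ := exists_eq_runMax (H := H) (q + M)
    rw [he]
    rcases le_or_gt v q with hvq | hqv
    · linarith [le_runMax (H := H) hvq]
    · obtain ⟨w, rfl⟩ := Nat.exists_eq_add_of_le (show M ≤ v by omega)
      rw [add_comm M w, hper]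
      linarith [le_runMax (H := H) (show w ≤ q by omega)]
  · obtain ⟨v, hv, he⟩ := exists_eq_runMax (H := H) q
    rw [he, ← hper]
    exact le_runMax (by omega)

end Records

section Circular

variable {n M : ℕ} (a : Fin n → ZMod M)

/-- Pollak: circular parking with preferences `a` on `ZMod M` leaves spot `u` empty exactly when
`a` is underloaded at `u`. -/
def Underloaded (u : ZMod M) : Prop :=
  ∀ k < M, #{i | (u - a i).val ≤ k} ≤ k

instance (u : ZMod M) : Decidable (Underloaded a u) := by
  unfold Underloaded
  infer_instance

def prefCount (r : ZMod M) : ℕ := #{i | a i = r}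

def height (t : ℕ) : ℤ := t - ∑ r ∈ range t, (prefCount a r : ℤ)

lemma height_succ_le (t : ℕ) : height a (t + 1) ≤ height a t + 1 := by
  simp only [height, sum_range_succ, Nat.cast_succ]
  linarith [(prefCount a t).cast_nonneg (α := ℤ)]

lemma underloaded_add_const_iff (w u : ZMod M) :
    Underloaded (fun i => a i + w) (u + w) ↔ Underloaded a u := by
  simp only [Underloaded, add_sub_add_right_eq_sub]

variable [NeZero M]

lemma ne_of_underloaded {u : ZMod M} (h : Underloaded a u) (i : Fin n) : a i ≠ u := by
  intro hiu
  have := card_eq_zero.1 (Nat.le_zero.1 (h 0 (Nat.pos_of_neZero M)))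
  simpa [hiu] using filter_eq_empty_iff.1 this (mem_univ i)

lemma card_arc {k : ℕ} (hk : k < M) (u : ZMod M) :
    #{i | (u - a i).val ≤ k} = ∑ j ∈ range (k + 1), prefCount a (u - j) := by
  rw [card_eq_sum_card_fiberwise (f := fun i => (u - a i).val) (t := range (k + 1))
    (fun i hi => by simpa [Nat.lt_succ_iff] using hi)]
  refine sum_congr rfl fun j hj => ?_
  have hjM : j < M := by simp only [mem_range] at hj; omega
  unfold prefCount
  congr 1
  ext i
  simp only [mem_filter, mem_univ, true_and]
  constructor
  · rintro ⟨-, hij⟩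
    rw [← hij, ZMod.natCast_zmod_val, sub_sub_cancel]
  · rintro hij
    rw [hij, sub_sub_cancel, ZMod.val_cast_of_lt hjM]
    exact ⟨by simp only [mem_range] at hj; omega, rfl⟩

lemma height_sub {k q : ℕ} (hk : k < M) (hkq : k ≤ q) :
    height a (q + 1) - height a (q - k) = k + 1 - #{i | ((q : ZMod M) - a i).val ≤ k} := by
  have hwindow : ∑ r ∈ Ico (q - k) (q + 1), (prefCount a r : ℤ) =
      ∑ j ∈ range (k + 1), (prefCount a (q - j) : ℤ) := by
    rw [sum_Ico_eq_sum_range, show q + 1 - (q - k) = k + 1 by omega, ← sum_range_reflect]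
    refine sum_congr rfl fun j hj => ?_
    simp only [mem_range] at hj
    rw [show q - k + (k + 1 - 1 - j) = q - j by omega, Nat.cast_sub (by omega)]
  rw [card_arc a hk, Nat.cast_sum, ← hwindow, height, height,
    sum_Ico_eq_sub _ (by omega : q - k ≤ q + 1)]
  push_cast [Nat.cast_sub hkq]
  ring

lemma height_add_period (t : ℕ) : height a (t + M) = height a t + (M - n) := by
  have hM : 0 < M := Nat.pos_of_neZero M
  have h := height_sub a (Nat.sub_lt hM one_pos) (show M - 1 ≤ t + M - 1 by omega)
  rw [filter_true_of_mem fun i _ => Nat.le_sub_one_of_lt (ZMod.val_lt _), card_univ,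
    Fintype.card_fin, show t + M - 1 + 1 = t + M by omega,
    show t + M - 1 - (M - 1) = t by omega, Nat.cast_sub (by omega)] at h
  push_cast at h
  linarith

lemma underloaded_natCast_iff_strictRecord (hn : n < M) {u : ℕ} (hu : u < M) :
    Underloaded a u ↔ ∀ v < u + M + 1, height a v < height a (u + M + 1) := by
  have harc (k : ℕ) (hk : k < M) : #{i | ((u : ZMod M) - a i).val ≤ k} ≤ k ↔
      height a (u + M - k) < height a (u + M + 1) := by
    have := height_sub a hk (show k ≤ u + M by omega)
    rw [Nat.cast_add, ZMod.natCast_self, add_zero] at this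
    omega
  constructor
  · intro h v hv
    have hwindow (w : ℕ) (huw : u < w) (hw : w ≤ u + M) :
        height a w < height a (u + M + 1) := by
      have := (harc (u + M - w) (by omega)).1 (h _ (by omega))
      rwa [show u + M - (u + M - w) = w by omega] at this
    rcases le_or_gt v u with hvu | huv
    · have : height a v < height a (v + M) := by
        rw [height_add_period]
        have : (n : ℤ) < M := by exact_mod_cast hn
        linarith
      exact this.trans (hwindow _ (by omega) (by omega))
    · exact hwindow v huv (by omega)
  · exact fun h k hk => (harc k hk).2 (h _ (by omega))

theorem card_underloaded (hn : n < M) : #{u | Underloaded a u} = M - n := by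
  have hrecords := card_strictRecords_Ioc (height_succ_le a) (show M ≤ M + M by omega)
  rw [runMax_add_period (height_add_period a) (by omega) le_rfl, add_sub_cancel_left,
    ← Nat.cast_sub hn.le, Nat.cast_inj] at hrecords
  rw [← hrecords]
  refine card_nbij' (fun u => u.val + M + 1) (fun t => ((t - (M + 1) : ℕ) : ZMod M))
    (fun u hu => ?_) (fun t ht => ?_) (fun u _ => ?_) (fun t ht => ?_)
  · simp only [mem_coe, mem_filter, mem_univ, true_and, mem_Ioc] at hu ⊢
    rw [← ZMod.natCast_zmod_val u,
      underloaded_natCast_iff_strictRecord a hn (ZMod.val_lt u)] at hu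
    exact ⟨⟨by omega, by linarith [ZMod.val_lt u]⟩, hu⟩
  · simp only [mem_coe, mem_filter, mem_Ioc, mem_univ, true_and] at ht ⊢
    rw [underloaded_natCast_iff_strictRecord a hn (by omega),
      show t - (M + 1) + M + 1 = t by omega]
    exact ht.2
  · simp
  · simp only [mem_coe, mem_filter, mem_Ioc] at ht
    simp only [ZMod.val_cast_of_lt (show t - (M + 1) < M by omega)]
    omega

lemma card_underloaded_eq (u : ZMod M) :
    #{a : Fin n → ZMod M | Underloaded a u} = #{a : Fin n → ZMod M | Underloaded a 0} :=
  card_equiv (Equiv.subRight fun _ => u) fun a => by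
    simp only [mem_filter, mem_univ, true_and, Equiv.subRight_apply]
    rw [← underloaded_add_const_iff (a - fun _ => u) u, zero_add]
    simp only [Pi.sub_apply, sub_add_cancel]

theorem card_underloaded_zero (hn : n < M) :
    M * #{a : Fin n → ZMod M | Underloaded a 0} = M ^ n * (M - n) := by
  calc M * #{a : Fin n → ZMod M | Underloaded a 0}
      = ∑ u : ZMod M, #{a : Fin n → ZMod M | Underloaded a u} := by
        simp [card_underloaded_eq, ZMod.card]
    _ = ∑ a : Fin n → ZMod M, #{u | Underloaded a u} := by
        simp only [card_filter]
        exact sum_comm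
    _ = M ^ n * (M - n) := by
        simp [card_underloaded _ hn, ZMod.card]

end Circular

lemma underloaded_natCast_zero_iff {n M : ℕ} [NeZero M] {c : Fin n → ℕ}
    (hc : ∀ i, c i ∈ Icc 1 (M - 1)) :
    Underloaded (fun i => (c i : ZMod M)) 0 ↔ ∀ t, 1 ≤ t → #{i | t ≤ c i} ≤ M - t := by
  have hc' (i : Fin n) : 1 ≤ c i ∧ c i < M := by have := mem_Icc.1 (hc i); omega
  have hval (i : Fin n) : (0 - (c i : ZMod M)).val = M - c i := by
    have hci := ZMod.val_cast_of_lt (hc' i).2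
    have hne : (c i : ZMod M) ≠ 0 := fun h => by
      rw [h, ZMod.val_zero] at hci
      have := hc' i
      omega
    rw [zero_sub, ZMod.neg_val, if_neg hne, hci]
  have hfilter (k : ℕ) (hk : k < M) :
      #{i | (0 - (c i : ZMod M)).val ≤ k} = #{i | M - k ≤ c i} :=
    congrArg card (filter_congr fun i _ => by rw [hval]; have := hc' i; omega)
  constructor
  · intro h t ht
    rcases le_or_gt t M with htM | hMt
    · have := h (M - t) (by omega)
      rwa [hfilter _ (by omega), Nat.sub_sub_self htM] at this
    · rw [filter_false_of_mem fun i _ => by have := hc' i; omega, card_empty]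
      exact Nat.zero_le _
  · intro h k hk
    rw [hfilter k hk]
    have := h (M - k) (by omega)
    rwa [Nat.sub_sub_self hk.le] at this

open Classical in
theorem card_filter_piFinset_eq_card_underloaded {n M : ℕ} [NeZero M] :
    #{c ∈ Fintype.piFinset fun _ : Fin n => Icc 1 (M - 1) |
        ∀ t, 1 ≤ t → #{i | t ≤ c i} ≤ M - t} =
      #{a : Fin n → ZMod M | Underloaded a 0} := by
  refine card_nbij' (fun c i => (c i : ZMod M)) (fun a i => (a i).val)
    (fun c hc => ?_) (fun a ha => ?_) (fun c hc => ?_) (fun a _ => ?_)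
  · simp only [mem_coe, mem_filter, Fintype.mem_piFinset, mem_univ, true_and] at hc ⊢
    exact (underloaded_natCast_zero_iff hc.1).2 hc.2
  · simp only [mem_coe, mem_filter, mem_univ, true_and] at ha
    have hval (i : Fin n) : (a i).val ∈ Icc 1 (M - 1) := by
      have := ZMod.val_lt (a i)
      have := (ZMod.val_ne_zero (a i)).2 (ne_of_underloaded a ha i)
      exact mem_Icc.2 ⟨by omega, by omega⟩
    simp only [mem_coe, mem_filter, Fintype.mem_piFinset]
    refine ⟨hval, (underloaded_natCast_zero_iff hval).1 ?_⟩
    simpa only [ZMod.natCast_zmod_val] using ha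
  · simp only [mem_coe, mem_filter, Fintype.mem_piFinset] at hc
    funext i
    exact ZMod.val_cast_of_lt (by have := mem_Icc.1 (hc.1 i); omega)
  · funext i
    exact ZMod.natCast_zmod_val (a i)

/-- For `n` unit-size cars and a trailer of length `z - 1`, the number of parking
sequences equals `z(z+n)^(n-1)`. -/
theorem numPark_unit (n : ℕ) (hn : 1 ≤ n) (z : ℕ) (hz : 1 ≤ z) :
    numPark n (fun _ => 1) z = z * (z + n) ^ (n - 1) := by
  have : NeZero (z + n) := ⟨by omega⟩
  have hpark : numPark n (fun _ => 1) z = #{a : Fin n → ZMod (z + n) | Underloaded a 0} := by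
    classical
    rw [← card_filter_piFinset_eq_card_underloaded, numPark]
    simp only [sum_const, card_univ, Fintype.card_fin, smul_eq_mul, mul_one,
      show z - 1 + n = z + n - 1 by omega]
    refine congrArg card (filter_congr fun c hc => ?_)
    rw [isParkingSeq_unit_iff hz]
    exact and_iff_right fun i => (mem_Icc.1 (Fintype.mem_piFinset.1 hc i)).1
  have hcount := card_underloaded_zero (n := n) (M := z + n) (by omega)
  have hpow : (z + n) ^ n = (z + n) * (z + n) ^ (n - 1) := by
    rw [← pow_succ', Nat.sub_add_cancel hn]
  rw [← hpark, Nat.add_sub_cancel, hpow, mul_assoc] at hcount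
  rw [Nat.eq_of_mul_eq_mul_left (by omega) hcount, mul_comm]
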